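/- arXiv:0908.1912 — 3 statements merged into one kernel-verified Lean document; each statement's English description precedes it below -/
import Mathlib

section
/- Let X be compact, η and η₂(·,θ) continuous. Suppose a probability measure ξ* and a parameter θ* satisfy: (i) θ* minimizes θ ↦ ∫ (η(x) − η₂(x,θ))² dξ*(x) over Θ; (ii) |η(x) − η₂(x,θ*)| = ‖η − η₂(·,θ*)‖_∞ for every x in the support of ξ*; (iii) θ* is a best uniform approximation, i.e. ‖η − η₂(·,θ*)‖_∞ = inf_{θ∈Θ} ‖η − η₂(·,θ)‖_∞. Then ξ* maximizes Δ(ξ) = inf_θ ∫ (η − η₂(·,θ))² dξ over all probability measures, and Δ(ξ*) = ‖η − η₂(·,θ*)‖_∞². -/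
open MeasureTheory Set

theorem stmt_1 {X : Type*} [MetricSpace X] [CompactSpace X] [Nonempty X]
    [MeasurableSpace X] [BorelSpace X] {m : ℕ}
    (Θ : Set (Fin m → ℝ)) (η : X → ℝ) (hη : Continuous η)
    (η₂ : X → (Fin m → ℝ) → ℝ)
    (hη₂ : ∀ θ ∈ Θ, Continuous fun x => η₂ x θ)
    (ξstar : Measure X) (hξstar : IsProbabilityMeasure ξstar)
    (θstar : Fin m → ℝ) (hθΘ : θstar ∈ Θ)
    -- (i) θ* minimizes the integrated squared error under ξ*
    (hmin : ∀ θ ∈ Θ, ∫ x, (η x - η₂ x θstar) ^ 2 ∂ξstar ≤ ∫ x, (η x - η₂ x θ) ^ 2 ∂ξstar)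
    -- (ii) on the support of ξ*, the error attains its sup-norm
    (hsupp : ∀ x : X, (∀ U : Set X, IsOpen U → x ∈ U → ξstar U ≠ 0) →
      |η x - η₂ x θstar| = ⨆ y : X, |η y - η₂ y θstar|)
    -- (iii) θ* is a best uniform approximation
    (hbest : ∀ θ ∈ Θ, (⨆ y : X, |η y - η₂ y θstar|) ≤ ⨆ y : X, |η y - η₂ y θ|) :
    (∀ ξ : Measure X, IsProbabilityMeasure ξ →
        (⨅ θ : Θ, ∫ x, (η x - η₂ x θ) ^ 2 ∂ξ) ≤
          ⨅ θ : Θ, ∫ x, (η x - η₂ x θ) ^ 2 ∂ξstar) ∧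
      (⨅ θ : Θ, ∫ x, (η x - η₂ x θ) ^ 2 ∂ξstar) =
        (⨆ y : X, |η y - η₂ y θstar|) ^ 2 := by
  have hΘne : Nonempty Θ := ⟨⟨θstar, hθΘ⟩⟩
  set f : X → ℝ := fun x => η x - η₂ x θstar with hfdef
  have hf : Continuous f := hη.sub (hη₂ θstar hθΘ)
  set M : ℝ := ⨆ y : X, |f y| with hMdef
  have hbdd : BddAbove (range fun y => |f y|) :=
    (isCompact_range hf.abs).bddAbove
  have hMle : ∀ x, |f x| ≤ M := fun x => le_ciSup hbdd x
  have hsqle : ∀ x, f x ^ 2 ≤ M ^ 2 := by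
    intro x
    have := hMle x
    nlinarith [sq_abs (f x), abs_nonneg (f x)]
  -- integrability of squared errors
  have hint : ∀ (ξ : Measure X), IsFiniteMeasure ξ → Integrable (fun x => f x ^ 2) ξ := by
    intro ξ hξ
    exact integrableOn_univ.mp
      (((hf.pow 2).continuousOn).integrableOn_compact isCompact_univ)
  -- a.e. equality f^2 = M^2 under ξstar
  have hae : ∀ᵐ x ∂ξstar, f x ^ 2 = M ^ 2 := by
    have hN : ξstar {x | ¬ ∀ U : Set X, IsOpen U → x ∈ U → ξstar U ≠ 0} = 0 := by
      apply measure_null_of_locally_null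
      intro x hx
      simp only [mem_setOf_eq, not_forall] at hx
      obtain ⟨U, hU, hxU, h0⟩ := hx
      rw [not_ne_iff] at h0
      exact ⟨U, mem_nhdsWithin_of_mem_nhds (hU.mem_nhds hxU), h0⟩
    have hsupp' : ∀ᵐ x ∂ξstar, ∀ U : Set X, IsOpen U → x ∈ U → ξstar U ≠ 0 := by
      rw [ae_iff]; exact hN
    filter_upwards [hsupp'] with x hx
    have := hsupp x hx
    rw [← sq_abs (f x), this]
  have hIstar : ∫ x, f x ^ 2 ∂ξstar = M ^ 2 := by
    rw [integral_congr_ae hae]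
    simp
  -- the key equality
  have hbb : ∀ (ξ : Measure X), BddBelow (range fun θ : Θ => ∫ x, (η x - η₂ x (θ : Fin m → ℝ)) ^ 2 ∂ξ) := by
    intro ξ
    refine ⟨0, ?_⟩
    rintro y ⟨θ, rfl⟩
    exact integral_nonneg fun x => sq_nonneg _
  have hkey : (⨅ θ : Θ, ∫ x, (η x - η₂ x θ) ^ 2 ∂ξstar) = M ^ 2 := by
    apply le_antisymm
    · exact (ciInf_le (hbb ξstar) ⟨θstar, hθΘ⟩).trans (le_of_eq hIstar)
    · exact le_ciInf fun θ => hIstar ▸ hmin θ θ.2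
  refine ⟨?_, hkey⟩
  intro ξ hξ
  rw [hkey]
  calc (⨅ θ : Θ, ∫ x, (η x - η₂ x θ) ^ 2 ∂ξ)
      ≤ ∫ x, f x ^ 2 ∂ξ := ciInf_le (hbb ξ) ⟨θstar, hθΘ⟩
    _ ≤ ∫ _x, M ^ 2 ∂ξ :=
        integral_mono (hint ξ inferInstance) (integrable_const _) hsqle
    _ = M ^ 2 := by simp
end

section
/- The function θ ↦ sup_{x∈[−1,1]} (1 − x²)(8x³ − θ₂x − θ₁)² over θ ∈ ℝ² attains its minimum value 1 at θ = (0, 4), i.e. sup_{x∈[−1,1]} (8x³ − 4x)²(1 − x²) = 1, and for any (θ₁,θ₂) ≠ (0,4), sup_{x∈[−1,1]} (1−x²)(8x³ − θ₂x − θ₁)² ≥ 1. -/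
open Set

lemma bdd_helper (F : ℝ → ℝ) (hF : Continuous F) :
    BddAbove (Set.range fun x : Set.Icc (-1:ℝ) 1 => F x) := by
  rw [← Set.image_eq_range]
  exact (isCompact_Icc.image hF).bddAbove

lemma step_pos (x θ₁ θ₂ : ℝ) (_hx2 : x^2 < 1) (hc : 0 < 8*x^3-4*x)
    (heq : (1-x^2)*(8*x^3-4*x)^2 = 1)
    (h : (1-x^2)*(8*x^3-θ₂*x-θ₁)^2 < 1) : 0 < (θ₂-4)*x+θ₁ := by
  by_contra hcon
  push_neg at hcon
  -- then p := 8x³-θ₂x-θ₁ ≥ c := 8x³-4x > 0, so p² ≥ c², contradiction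
  nlinarith [sq_nonneg (8*x^3-θ₂*x-θ₁ - (8*x^3-4*x)), sq_nonneg (8*x^3-θ₂*x-θ₁ + (8*x^3-4*x)), mul_pos hc hc]

lemma step_neg (x θ₁ θ₂ : ℝ) (_hx2 : x^2 < 1) (hc : 8*x^3-4*x < 0)
    (heq : (1-x^2)*(8*x^3-4*x)^2 = 1)
    (h : (1-x^2)*(8*x^3-θ₂*x-θ₁)^2 < 1) : (θ₂-4)*x+θ₁ < 0 := by
  by_contra hcon
  push_neg at hcon
  nlinarith [sq_nonneg (8*x^3-θ₂*x-θ₁ - (8*x^3-4*x)), sq_nonneg (8*x^3-θ₂*x-θ₁ + (8*x^3-4*x)), mul_pos (neg_pos.2 hc) (neg_pos.2 hc)]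

theorem stmt_12 :
    (⨆ x : Set.Icc (-1 : ℝ) 1,
        (8 * (x : ℝ) ^ 3 - 4 * (x : ℝ)) ^ 2 * (1 - (x : ℝ) ^ 2)) = 1 ∧
    ∀ θ₁ θ₂ : ℝ, (θ₁, θ₂) ≠ ((0 : ℝ), (4 : ℝ)) →
      (1 : ℝ) ≤ ⨆ x : Set.Icc (-1 : ℝ) 1,
        (1 - (x : ℝ) ^ 2) * (8 * (x : ℝ) ^ 3 - θ₂ * (x : ℝ) - θ₁) ^ 2 := by
  haveI : Nonempty (Set.Icc (-1:ℝ) 1) := ⟨⟨0, by norm_num⟩⟩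
  have hs : (Real.sqrt 2)^2 = 2 := Real.sq_sqrt (by norm_num)
  set s := Real.sqrt 2 with hsdef
  have hs0 : 0 ≤ s := Real.sqrt_nonneg 2
  have hs1 : 1 < s := by nlinarith
  have hs2 : s < 2 := by nlinarith
  set x₁ := Real.sqrt ((2+s)/4) with hx1def
  set x₂ := Real.sqrt ((2-s)/4) with hx2def
  have hx1sq : x₁^2 = (2+s)/4 := Real.sq_sqrt (by linarith)
  have hx2sq : x₂^2 = (2-s)/4 := Real.sq_sqrt (by linarith)
  have hx1pos : 0 < x₁ := Real.sqrt_pos.2 (by nlinarith)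
  have hx2pos : 0 < x₂ := Real.sqrt_pos.2 (by nlinarith)
  have hx1lt : x₁^2 < 1 := by nlinarith
  have hx2lt : x₂^2 < 1 := by nlinarith
  have hx1le : x₁ ≤ 1 := by nlinarith
  have hx2le : x₂ ≤ 1 := by nlinarith
  have hx12 : x₂ < x₁ := by nlinarith
  have mem1 : x₁ ∈ Set.Icc (-1:ℝ) 1 := ⟨by linarith, hx1le⟩
  have mem2 : x₂ ∈ Set.Icc (-1:ℝ) 1 := ⟨by linarith, hx2le⟩
  have mem1' : -x₁ ∈ Set.Icc (-1:ℝ) 1 := ⟨by linarith, by linarith⟩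
  have mem2' : -x₂ ∈ Set.Icc (-1:ℝ) 1 := ⟨by linarith, by linarith⟩
  have hz1 : 8*x₁^4 - 8*x₁^2 + 1 = 0 := by
    linear_combination (8*x₁^2 + 2*s - 4) * hx1sq + (1/2)*hs
  have hz2 : 8*x₂^4 - 8*x₂^2 + 1 = 0 := by
    linear_combination (8*x₂^2 - 2*s - 4) * hx2sq + (1/2)*hs
  have heq1 : (1 - x₁^2) * (8*x₁^3 - 4*x₁)^2 = 1 := by
    linear_combination (-(8*x₁^4 - 8*x₁^2 + 1)) * hz1
  have heq2 : (1 - x₂^2) * (8*x₂^3 - 4*x₂)^2 = 1 := by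
    linear_combination (-(8*x₂^4 - 8*x₂^2 + 1)) * hz2
  have hc1 : 0 < 8*x₁^3 - 4*x₁ := by nlinarith
  have hc2 : 8*x₂^3 - 4*x₂ < 0 := by nlinarith
  constructor
  · apply le_antisymm
    · apply ciSup_le
      intro x
      nlinarith [sq_nonneg (8*(x:ℝ)^4 - 8*(x:ℝ)^2 + 1)]
    · have hb : BddAbove (Set.range fun x : Set.Icc (-1:ℝ) 1 =>
          (8 * (x : ℝ) ^ 3 - 4 * (x : ℝ)) ^ 2 * (1 - (x : ℝ) ^ 2)) :=
        bdd_helper (fun y => (8 * y ^ 3 - 4 * y) ^ 2 * (1 - y ^ 2)) (by fun_prop)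
      have := le_ciSup hb (⟨x₁, mem1⟩ : Set.Icc (-1:ℝ) 1)
      calc (1:ℝ) = (8 * x₁ ^ 3 - 4 * x₁) ^ 2 * (1 - x₁ ^ 2) := by linear_combination -heq1
        _ ≤ _ := this
  · intro θ₁ θ₂ _
    by_contra h
    push_neg at h
    have hb : BddAbove (Set.range fun x : Set.Icc (-1:ℝ) 1 =>
        (1 - (x : ℝ) ^ 2) * (8 * (x : ℝ) ^ 3 - θ₂ * (x : ℝ) - θ₁) ^ 2) :=
      bdd_helper (fun y => (1 - y ^ 2) * (8 * y ^ 3 - θ₂ * y - θ₁) ^ 2) (by fun_prop)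
    have g1 := lt_of_le_of_lt (le_ciSup hb (⟨x₁, mem1⟩ : Set.Icc (-1:ℝ) 1)) h
    have g2 := lt_of_le_of_lt (le_ciSup hb (⟨x₂, mem2⟩ : Set.Icc (-1:ℝ) 1)) h
    have g3 := lt_of_le_of_lt (le_ciSup hb (⟨-x₂, mem2'⟩ : Set.Icc (-1:ℝ) 1)) h
    have g4 := lt_of_le_of_lt (le_ciSup hb (⟨-x₁, mem1'⟩ : Set.Icc (-1:ℝ) 1)) h
    simp only at g1 g2 g3 g4
    have A : 0 < (θ₂-4)*x₁+θ₁ := step_pos x₁ θ₁ θ₂ hx1lt hc1 heq1 (by linarith [g1])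
    have B : (θ₂-4)*x₂+θ₁ < 0 := step_neg x₂ θ₁ θ₂ hx2lt hc2 heq2 (by linarith [g2])
    have C : 0 < (θ₂-4)*(-x₂)+θ₁ := by
      apply step_pos (-x₂) θ₁ θ₂ (by linarith [hx2lt]) (by linarith [hc2]) (by linear_combination heq2)
      linarith [g3]
    have D : (θ₂-4)*(-x₁)+θ₁ < 0 := by
      apply step_neg (-x₁) θ₁ θ₂ (by linarith [hx1lt]) (by linarith [hc1]) (by linear_combination heq1)
      linarith [g4]
    have haa : 0 < (θ₂-4)*x₁ := by linarith
    have hbb : (θ₂-4)*x₂ < 0 := by linarith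
    linarith [mul_pos hx2pos haa, mul_neg_of_pos_of_neg hx1pos hbb]
end

section
/- For every p ∈ [0, 1/2], the discrete probability measure ξ_p assigning masses p, ((2−√2) + 4p(√2−1))/4, (√2 − 4p(√2−1))/4, 1/2 − p to the points −√(2+√2)/2, −√(2−√2)/2, √(2−√2)/2, √(2+√2)/2 respectively has total mass 1, nonnegative weights, and satisfies ∫ (1−x²)(8x³−4x) dξ_p(x) = 0 and ∫ x(1−x²)(8x³−4x) dξ_p(x) = 0. -/
open MeasureTheory

/-- The candidate KL-optimal design of Example 4.4. -/
noncomputable def xiKL (p : ℝ) : Measure ℝ :=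
  ENNReal.ofReal p • Measure.dirac (-(Real.sqrt (2 + Real.sqrt 2)) / 2) +
    ENNReal.ofReal (((2 - Real.sqrt 2) + 4 * p * (Real.sqrt 2 - 1)) / 4) •
      Measure.dirac (-(Real.sqrt (2 - Real.sqrt 2)) / 2) +
    ENNReal.ofReal ((Real.sqrt 2 - 4 * p * (Real.sqrt 2 - 1)) / 4) •
      Measure.dirac (Real.sqrt (2 - Real.sqrt 2) / 2) +
    ENNReal.ofReal (1 / 2 - p) • Measure.dirac (Real.sqrt (2 + Real.sqrt 2) / 2)

lemma integrable_dirac'' {f : ℝ → ℝ} (hf : Measurable f) (a : ℝ) :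
    Integrable f (Measure.dirac a) :=
  ⟨hf.aestronglyMeasurable, by
    rw [HasFiniteIntegral, lintegral_dirac]; exact ENNReal.coe_lt_top⟩

lemma xiKL_integral (p : ℝ) (hp : p ∈ Set.Icc (0 : ℝ) (1 / 2))
    {f : ℝ → ℝ} (hf : Measurable f) :
    ∫ x, f x ∂(xiKL p) =
      p * f (-(Real.sqrt (2 + Real.sqrt 2)) / 2) +
      ((2 - Real.sqrt 2) + 4 * p * (Real.sqrt 2 - 1)) / 4 *
        f (-(Real.sqrt (2 - Real.sqrt 2)) / 2) +
      (Real.sqrt 2 - 4 * p * (Real.sqrt 2 - 1)) / 4 *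
        f (Real.sqrt (2 - Real.sqrt 2) / 2) +
      (1 / 2 - p) * f (Real.sqrt (2 + Real.sqrt 2) / 2) := by
  obtain ⟨hp0, hp2⟩ := hp
  have hs1 : (1:ℝ) ≤ Real.sqrt 2 := by
    nlinarith [Real.sq_sqrt (by norm_num : (0:ℝ) ≤ 2), Real.sqrt_nonneg 2]
  have hsle : Real.sqrt 2 ≤ 2 := by
    nlinarith [Real.sq_sqrt (by norm_num : (0:ℝ) ≤ 2), Real.sqrt_nonneg 2]
  have hw2 : 0 ≤ ((2 - Real.sqrt 2) + 4 * p * (Real.sqrt 2 - 1)) / 4 := by nlinarith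
  have hw3 : 0 ≤ (Real.sqrt 2 - 4 * p * (Real.sqrt 2 - 1)) / 4 := by nlinarith
  have hI : ∀ (c : ℝ) (x : ℝ), Integrable f (ENNReal.ofReal c • Measure.dirac x) :=
    fun c x => (integrable_dirac'' hf x).smul_measure ENNReal.ofReal_ne_top
  rw [xiKL, integral_add_measure (((hI _ _).add_measure (hI _ _)).add_measure (hI _ _)) (hI _ _),
    integral_add_measure ((hI _ _).add_measure (hI _ _)) (hI _ _),
    integral_add_measure (hI _ _) (hI _ _)]
  simp only [integral_smul_measure, integral_dirac, smul_eq_mul]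
  rw [ENNReal.toReal_ofReal hp0, ENNReal.toReal_ofReal hw2, ENNReal.toReal_ofReal hw3,
    ENNReal.toReal_ofReal (by linarith : (0:ℝ) ≤ 1/2 - p)]

theorem stmt_14 (p : ℝ) (hp : p ∈ Set.Icc (0 : ℝ) (1 / 2)) :
    IsProbabilityMeasure (xiKL p) ∧
    (0 ≤ p ∧ 0 ≤ ((2 - Real.sqrt 2) + 4 * p * (Real.sqrt 2 - 1)) / 4 ∧
      0 ≤ (Real.sqrt 2 - 4 * p * (Real.sqrt 2 - 1)) / 4 ∧ 0 ≤ 1 / 2 - p) ∧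
    (∫ x, (1 - x ^ 2) * (8 * x ^ 3 - 4 * x) ∂(xiKL p)) = 0 ∧
    (∫ x, x * ((1 - x ^ 2) * (8 * x ^ 3 - 4 * x)) ∂(xiKL p)) = 0 := by
  obtain ⟨hp0, hp2⟩ := hp
  have hs : Real.sqrt 2 ^ 2 = 2 := Real.sq_sqrt (by norm_num)
  have hs1 : (1:ℝ) ≤ Real.sqrt 2 := by nlinarith [Real.sqrt_nonneg 2]
  have hsle : Real.sqrt 2 ≤ 2 := by nlinarith [Real.sqrt_nonneg 2]
  have hw2 : 0 ≤ ((2 - Real.sqrt 2) + 4 * p * (Real.sqrt 2 - 1)) / 4 := by nlinarith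
  have hw3 : 0 ≤ (Real.sqrt 2 - 4 * p * (Real.sqrt 2 - 1)) / 4 := by nlinarith
  have hw4 : (0:ℝ) ≤ 1/2 - p := by linarith
  refine ⟨?_, ⟨hp0, hw2, hw3, hw4⟩, ?_, ?_⟩
  · constructor
    simp only [xiKL, Measure.coe_add, Pi.add_apply, Measure.smul_apply,
      Measure.dirac_apply_of_mem (Set.mem_univ _), smul_eq_mul, mul_one]
    rw [← ENNReal.ofReal_add hp0 hw2, ← ENNReal.ofReal_add (by linarith) hw3,
      ← ENNReal.ofReal_add (by linarith) hw4]
    rw [show p + ((2 - Real.sqrt 2) + 4 * p * (Real.sqrt 2 - 1)) / 4 +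
        (Real.sqrt 2 - 4 * p * (Real.sqrt 2 - 1)) / 4 + (1/2 - p) = 1 by ring]
    exact ENNReal.ofReal_one
  · rw [xiKL_integral p ⟨hp0, hp2⟩ (by fun_prop)]
    set s := Real.sqrt 2
    set a := Real.sqrt (2 + s) with ha'
    set b := Real.sqrt (2 - s) with hb'
    have ha : a ^ 2 = 2 + s := Real.sq_sqrt (by linarith)
    have hb : b ^ 2 = 2 - s := Real.sq_sqrt (by linarith)
    have hab : b = (s - 1) * a := by
      rw [hb', show (2:ℝ) - s = ((s-1)*a)^2 by nlinarith,
        Real.sqrt_sq (by nlinarith [Real.sqrt_nonneg (2+s)])]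
    have hA : (1 - (a/2)^2) * (8*(a/2)^3 - 4*(a/2)) = (s-1)*a/2 := by
      linear_combination ((3/2)*a - (1/4)*a*(a^2-2-s) - (1/2)*(2+s)*a) * ha - (a/4) * hs
    have hA' : (1 - (-a/2)^2) * (8*(-a/2)^3 - 4*(-a/2)) = -((s-1)*a/2) := by
      linear_combination (-(3/2)*a + (1/4)*a*(a^2-2-s) + (1/2)*(2+s)*a) * ha + (a/4) * hs
    have hB : (1 - (b/2)^2) * (8*(b/2)^3 - 4*(b/2)) = -((s+1)*b/2) := by
      linear_combination ((3/2)*b - (1/4)*b*(b^2-(2-s)) - (1/2)*(2-s)*b) * hb - (b/4) * hs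
    have hB' : (1 - (-b/2)^2) * (8*(-b/2)^3 - 4*(-b/2)) = (s+1)*b/2 := by
      linear_combination (-(3/2)*b + (1/4)*b*(b^2-(2-s)) + (1/2)*(2-s)*b) * hb + (b/4) * hs
    linear_combination p * hA' + (((2-s)+4*p*(s-1))/4) * hB' + ((s-4*p*(s-1))/4) * hB +
      (1/2-p) * hA - (s-1)*(1-4*p)*(s+1)/4 * hab - (s-1)*(1-4*p)*a/4 * hs
  · rw [xiKL_integral p ⟨hp0, hp2⟩ (by fun_prop)]
    set s := Real.sqrt 2
    set a := Real.sqrt (2 + s) with ha'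
    set b := Real.sqrt (2 - s) with hb'
    have ha : a ^ 2 = 2 + s := Real.sq_sqrt (by linarith)
    have hb : b ^ 2 = 2 - s := Real.sq_sqrt (by linarith)
    have hA : (1 - (a/2)^2) * (8*(a/2)^3 - 4*(a/2)) = (s-1)*a/2 := by
      linear_combination ((3/2)*a - (1/4)*a*(a^2-2-s) - (1/2)*(2+s)*a) * ha - (a/4) * hs
    have hA' : (1 - (-a/2)^2) * (8*(-a/2)^3 - 4*(-a/2)) = -((s-1)*a/2) := by
      linear_combination (-(3/2)*a + (1/4)*a*(a^2-2-s) + (1/2)*(2+s)*a) * ha + (a/4) * hs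
    have hB : (1 - (b/2)^2) * (8*(b/2)^3 - 4*(b/2)) = -((s+1)*b/2) := by
      linear_combination ((3/2)*b - (1/4)*b*(b^2-(2-s)) - (1/2)*(2-s)*b) * hb - (b/4) * hs
    have hB' : (1 - (-b/2)^2) * (8*(-b/2)^3 - 4*(-b/2)) = (s+1)*b/2 := by
      linear_combination (-(3/2)*b + (1/4)*b*(b^2-(2-s)) + (1/2)*(2-s)*b) * hb + (b/4) * hs
    have hGA : (a/2)*((1 - (a/2)^2) * (8*(a/2)^3 - 4*(a/2))) = (s-1)*a^2/4 := by
      linear_combination (a/2) * hA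
    have hGA' : (-a/2)*((1 - (-a/2)^2) * (8*(-a/2)^3 - 4*(-a/2))) = (s-1)*a^2/4 := by
      linear_combination (-a/2) * hA'
    have hGB : (b/2)*((1 - (b/2)^2) * (8*(b/2)^3 - 4*(b/2))) = -((s+1)*b^2/4) := by
      linear_combination (b/2) * hB
    have hGB' : (-b/2)*((1 - (-b/2)^2) * (8*(-b/2)^3 - 4*(-b/2))) = -((s+1)*b^2/4) := by
      linear_combination (-b/2) * hB'
    linear_combination p * hGA' + (((2-s)+4*p*(s-1))/4) * hGB' + ((s-4*p*(s-1))/4) * hGB +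
      (1/2-p) * hGA + (s-1)/8 * ha - (s+1)/8 * hb + (1/4) * hs
end
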